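/- arXiv:2406.06415 — 3 statements merged into one kernel-verified Lean document; each statement's English description precedes it below -/
import Mathlib

section
/- For every natural number m ≥ 1 and real δ with 0 < δ < 1, the rescaled Chebyshev polynomial Q_m(x) = T_m(2x/(1-δ) - 1) / T_m(2/(1-δ) - 1) satisfies Q_m(1) = 1 and |Q_m(x)| ≤ 2 * exp(-2 m * sqrt((1-(1-δ))/(1+(1-δ)))) = 2 * exp(-2 m * sqrt(δ/(2-δ))) for all x in [0, 1-δ]. -/
open Real Polynomial.Chebyshev

lemma T_cosh_aux (n : ℤ) (t : ℝ) :
    (Polynomial.Chebyshev.T ℝ n).eval (Real.cosh t) = Real.cosh (n * t) := by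
  have h : (((Polynomial.Chebyshev.T ℝ n).eval (Real.cosh t) : ℝ) : ℂ) =
      ((Real.cosh ((n : ℝ) * t) : ℝ) : ℂ) := by
    rw [complex_ofReal_eval_T, Complex.ofReal_cosh, Complex.ofReal_cosh,
      ← Complex.cos_mul_I, ← Complex.cos_mul_I, T_complex_cos]
    push_cast
    ring_nf
  exact_mod_cast h

lemma sinh_le_mul_cosh {x : ℝ} (hx : 0 ≤ x) : Real.sinh x ≤ x * Real.cosh x := by
  have key : MonotoneOn (fun x => x * Real.cosh x - Real.sinh x) (Set.Ici 0) := by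
    apply monotoneOn_of_deriv_nonneg (convex_Ici 0)
    · exact ((continuous_id.mul Real.continuous_cosh).sub Real.continuous_sinh).continuousOn
    · intro x _
      exact (((hasDerivAt_id x).mul (Real.hasDerivAt_cosh x)).sub
        (Real.hasDerivAt_sinh x)).differentiableAt.differentiableWithinAt
    · intro x hx
      simp only [interior_Ici, Set.mem_Ioi] at hx
      have hd : HasDerivAt (fun x => x * Real.cosh x - Real.sinh x) (x * Real.sinh x) x := by
        have h : HasDerivAt (fun x => x * Real.cosh x - Real.sinh x)
            (1 * Real.cosh x + x * Real.sinh x - Real.cosh x) x :=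
          ((hasDerivAt_id x).mul (Real.hasDerivAt_cosh x)).sub (Real.hasDerivAt_sinh x)
        convert h using 1
        simp only [id_eq, one_mul]
        ring
      rw [hd.deriv]
      have hs0 : Real.sinh 0 ≤ Real.sinh x := Real.sinh_le_sinh.mpr hx.le
      rw [Real.sinh_zero] at hs0
      exact mul_nonneg hx.le hs0
  have h0 := key Set.self_mem_Ici hx hx
  simp only [Real.cosh_zero, Real.sinh_zero, mul_one, zero_mul, sub_zero, zero_sub,
    neg_zero] at h0
  linarith

/-- The rescaled Chebyshev polynomial
`Q_m(x) = T_m(2x/(1-δ) - 1) / T_m(2/(1-δ) - 1)` satisfies `Q_m(1) = 1` and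
`|Q_m(x)| ≤ 2 * exp (-2 m * sqrt (δ/(2-δ)))` for all `x ∈ [0, 1-δ]`. -/
theorem rescaled_chebyshev_bound (m : ℕ) (hm : 1 ≤ m) (δ : ℝ) (hδ0 : 0 < δ) (hδ1 : δ < 1) :
    (fun x : ℝ => (Polynomial.Chebyshev.T ℝ m).eval (2 * x / (1 - δ) - 1) /
        (Polynomial.Chebyshev.T ℝ m).eval (2 / (1 - δ) - 1)) 1 = 1 ∧
      ∀ x ∈ Set.Icc (0 : ℝ) (1 - δ),
        |(Polynomial.Chebyshev.T ℝ m).eval (2 * x / (1 - δ) - 1) /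
            (Polynomial.Chebyshev.T ℝ m).eval (2 / (1 - δ) - 1)| ≤
          2 * Real.exp (-2 * m * Real.sqrt (δ / (2 - δ))) := by
  have hc : 0 < 1 - δ := by linarith
  set y : ℝ := 2 / (1 - δ) - 1 with hy
  have hy1 : 1 < y := by
    rw [hy, lt_sub_iff_add_lt, lt_div_iff₀ hc]; linarith
  have hy0 : 0 < y := by linarith
  set t : ℝ := Real.arsinh (Real.sqrt (y ^ 2 - 1)) with ht
  have hsq : 0 ≤ y ^ 2 - 1 := by nlinarith
  have hsinh : Real.sinh t = Real.sqrt (y ^ 2 - 1) := Real.sinh_arsinh _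
  have hcosh : Real.cosh t = y := by
    have h1 : Real.cosh t ^ 2 = y ^ 2 := by
      rw [Real.cosh_sq, hsinh, Real.sq_sqrt hsq]; ring
    nlinarith [Real.cosh_pos t]
  have ht0 : 0 ≤ t := by
    rw [ht, Real.arsinh_nonneg_iff]; exact Real.sqrt_nonneg _
  have hδs : 0 ≤ δ := hδ0.le
  have hsδ : Real.sqrt δ ^ 2 = δ := Real.sq_sqrt hδs
  have hB := sinh_le_mul_cosh (Real.sqrt_nonneg δ)
  have hC : Real.cosh (Real.sqrt δ) ^ 2 * (1 - δ) ≤ 1 := by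
    have h1 : Real.cosh (Real.sqrt δ) ^ 2 = Real.sinh (Real.sqrt δ) ^ 2 + 1 := Real.cosh_sq _
    have hs0 : Real.sinh 0 ≤ Real.sinh (Real.sqrt δ) := Real.sinh_le_sinh.mpr (Real.sqrt_nonneg δ)
    rw [Real.sinh_zero] at hs0
    nlinarith [Real.cosh_pos (Real.sqrt δ), Real.sqrt_nonneg δ]
  have hcosh2 : Real.cosh (2 * Real.sqrt δ) ≤ y := by
    have h2 : Real.cosh (2 * Real.sqrt δ) = 2 * Real.cosh (Real.sqrt δ) ^ 2 - 1 := by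
      rw [Real.cosh_two_mul]
      have h := Real.cosh_sq (Real.sqrt δ)
      linarith
    have h4 : Real.cosh (Real.sqrt δ) ^ 2 ≤ 1 / (1 - δ) := by
      rw [le_div_iff₀ hc]; linarith
    have h5 : y = 2 * (1 / (1 - δ)) - 1 := by rw [hy]; ring
    rw [h2, h5]
    linarith
  have htge : 2 * Real.sqrt δ ≤ t := by
    have h6 := (Real.cosh_le_cosh (x := 2 * Real.sqrt δ) (y := t)).mp
      (by rw [hcosh]; exact hcosh2)
    rwa [abs_of_nonneg (by positivity), abs_of_nonneg ht0] at h6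
  have hD : (Polynomial.Chebyshev.T ℝ (m : ℤ)).eval y = Real.cosh (m * t) := by
    rw [← hcosh, T_cosh_aux]
    push_cast
    ring_nf
  set s : ℝ := Real.sqrt (δ / (2 - δ)) with hs
  have hsle : s ≤ Real.sqrt δ := by
    apply Real.sqrt_le_sqrt
    rw [div_le_iff₀ (by linarith)]
    nlinarith
  have hden_lb : Real.exp (2 * m * s) / 2 ≤ (Polynomial.Chebyshev.T ℝ (m : ℤ)).eval y := by
    rw [hD]
    have h1 : Real.exp (m * t) / 2 ≤ Real.cosh (m * t) := by
      rw [Real.cosh_eq]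
      have h2 := (Real.exp_pos (-(m * t))).le
      apply div_le_div_of_nonneg_right _ (by norm_num)
      linarith
    refine le_trans ?_ h1
    apply div_le_div_of_nonneg_right _ (by norm_num)
    apply Real.exp_le_exp.mpr
    have hm1 : (1 : ℝ) ≤ m := by exact_mod_cast hm
    have h7 : 2 * s ≤ t := le_trans (by nlinarith [Real.sqrt_nonneg δ]) htge
    nlinarith [Real.sqrt_nonneg (δ / (2 - δ))]
  have hden_pos : 0 < (Polynomial.Chebyshev.T ℝ (m : ℤ)).eval y :=
    lt_of_lt_of_le (by positivity) hden_lb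
  constructor
  · simp only
    rw [show 2 * (1 : ℝ) / (1 - δ) - 1 = y by rw [hy]; ring]
    exact div_self hden_pos.ne'
  · intro x hx
    obtain ⟨hx0, hx1⟩ := hx
    set z : ℝ := 2 * x / (1 - δ) - 1 with hz
    have hz1 : -1 ≤ z := by
      rw [hz]
      have : 0 ≤ 2 * x / (1 - δ) := by positivity
      linarith
    have hz2 : z ≤ 1 := by
      rw [hz, sub_le_iff_le_add, div_le_iff₀ hc]
      linarith
    have hnum : |(Polynomial.Chebyshev.T ℝ (m : ℤ)).eval z| ≤ 1 := by
      rw [← Real.cos_arccos hz1 hz2, Polynomial.Chebyshev.T_real_cos]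
      exact Real.abs_cos_le_one _
    rw [abs_div, abs_of_pos hden_pos]
    have hexp : 2 * Real.exp (-2 * m * s) = 1 / (Real.exp (2 * m * s) / 2) := by
      rw [show (-2 : ℝ) * m * s = -(2 * m * s) by ring, Real.exp_neg]
      field_simp
    rw [hexp]
    exact div_le_div₀ zero_le_one hnum (by positivity) hden_lb
end

section
/- Detectability lemma: Let H = Σ_{i=1}^N H_i be a frustration-free Hamiltonian on a finite-dimensional Hilbert space where each H_i is an orthogonal projector; let P_i = 1 - H_i, P = P_1 ⋯ P_N, G the projector onto ker H, ε = gap(H) the smallest nonzero eigenvalue of H, and g the maximum over i of the number of indices j with [H_i, H_j] ≠ 0. Then the operator norm satisfies ‖P - G‖ ≤ sqrt(g²/(ε + g²)). -/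
/-!
Every `Pᵢ` fixes the ground space, so `P - G = P (1 - G)` and it suffices to bound `‖P χ‖` for
`χ` orthogonal to the ground space. Write `Qᵢ = 1 - Pᵢ` and `φⱼ = Pⱼ₊₁ ⋯ P_N χ`.
Pythagoras for the projections `Pⱼ` telescopes: `∑ⱼ ‖Qⱼ φⱼ‖² = ‖χ‖² - ‖P χ‖²`. Commuting `Qᵢ`
from the left through `P₁ ⋯ P_N` until it is annihilated by `Pᵢ`, each `Pⱼ` that does not commute
with `Qᵢ` costs at most `‖Qⱼ φⱼ‖`, so by Cauchy–Schwarz and double counting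
`∑ᵢ ‖Qᵢ P χ‖² ≤ g² ∑ⱼ ‖Qⱼ φⱼ‖²`. Since `P χ` is again orthogonal to the ground space, the gap
gives `ε ‖P χ‖² ≤ ⟪P χ, H P χ⟫ = ∑ᵢ ‖Qᵢ P χ‖²`, hence `(ε + g²) ‖P χ‖² ≤ g² ‖χ‖²`.
-/

open scoped Classical

open Finset RCLike InnerProductSpace Module.End

theorem sum_sq_sum_filter_le {ι : Type*} [Fintype ι] (r : ι → ι → Prop) [DecidableRel r]
    [Std.Symm r] {g : ℕ} (hg : ∀ i, #{j | r i j} ≤ g) (a : ι → ℝ) :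
    ∑ i, (∑ j with r i j, a j) ^ 2 ≤ g ^ 2 * ∑ j, a j ^ 2 := by
  calc ∑ i, (∑ j with r i j, a j) ^ 2
      ≤ ∑ i, (g : ℝ) * ∑ j with r i j, a j ^ 2 := by
        gcongr with i
        exact sq_sum_le_card_mul_sum_sq.trans (by gcongr; exact_mod_cast hg i)
    _ = g * ∑ j, #{i | r j i} * a j ^ 2 := by
        rw [← mul_sum, sum_comm' (s' := fun j => ({i | r j i} : Finset ι)) (t' := univ)]
        · simp_rw [sum_const, nsmul_eq_mul]
        · simpa using fun _ _ => comm
    _ ≤ g * ∑ j, g * a j ^ 2 := by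
        gcongr with j
        exact_mod_cast hg j
    _ = g ^ 2 * ∑ j, a j ^ 2 := by
        rw [← mul_sum]
        ring

theorem le_sqrt_div_add_mul_of_mul_sq_le {a b ε c : ℝ} (ha : 0 ≤ a) (hb : 0 ≤ b) (hε : 0 < ε)
    (hc : 0 ≤ c) (h : ε * a ^ 2 ≤ c * (b ^ 2 - a ^ 2)) : a ≤ √(c / (ε + c)) * b := by
  calc a = √(a ^ 2) := (Real.sqrt_sq ha).symm
    _ ≤ √(c / (ε + c) * b ^ 2) := by
        gcongr
        rw [div_mul_eq_mul_div, le_div_iff₀ (by positivity)]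
        linarith
    _ = √(c / (ε + c)) * b := by
        rw [Real.sqrt_mul (by positivity), Real.sqrt_sq hb]

def tailProd {M : Type*} [Monoid M] {n : ℕ} (P : Fin n → M) (j : Fin n) : M :=
  ((List.ofFn P).drop (j + 1)).prod

section Monoid

variable {M : Type*} [Monoid M] {n : ℕ}

theorem List.prod_mul_eq_right_of_forall {l : List M} {a : M} (h : ∀ x ∈ l, x * a = a) :
    l.prod * a = a :=
  List.prod_induction (· * a = a) (fun x y hx hy => by rw [mul_assoc, hy, hx]) (one_mul a) h

theorem List.mul_prod_eq_left_of_forall {l : List M} {a : M} (h : ∀ x ∈ l, a * x = a) :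
    a * l.prod = a :=
  List.prod_induction (a * · = a) (fun x y hx hy => by rw [← mul_assoc, hx, hy]) (mul_one a) h

theorem List.prod_ofFn_succ (P : Fin (n + 1) → M) :
    (List.ofFn P).prod = P 0 * (List.ofFn fun i => P i.succ).prod := by
  simp [List.ofFn_succ]

@[simp]
theorem tailProd_zero (P : Fin (n + 1) → M) :
    tailProd P 0 = (List.ofFn fun i => P i.succ).prod := by
  simp [tailProd, List.ofFn_succ]

@[simp]
theorem tailProd_succ (P : Fin (n + 1) → M) (j : Fin n) :
    tailProd P j.succ = tailProd (fun i => P i.succ) j := by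
  simp [tailProd, List.ofFn_succ]

end Monoid

section Projections

variable {𝕜 E : Type*} [RCLike 𝕜] [NormedAddCommGroup E] [InnerProductSpace 𝕜 E]

theorem LinearMap.IsSymmetric.mul_norm_sq_le_re_inner_apply [FiniteDimensional 𝕜 E]
    {T : E →ₗ[𝕜] E} (hT : T.IsSymmetric) {ε : ℝ}
    (hε : ∀ μ : ℝ, μ ≠ 0 → HasEigenvalue T μ → ε ≤ μ) {x : E} (hx : x ∈ (LinearMap.ker T)ᗮ) :
    ε * ‖x‖ ^ 2 ≤ re ⟪x, T x⟫_𝕜 := by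
  set b := hT.eigenvectorBasis rfl
  set μ := hT.eigenvalues rfl
  have hre : re ⟪x, T x⟫_𝕜 = ∑ i, μ i * ‖⟪b i, x⟫_𝕜‖ ^ 2 := by
    rw [← b.sum_inner_mul_inner, map_sum]
    refine sum_congr rfl fun i _ => ?_
    rw [← hT, hT.apply_eigenvectorBasis, inner_smul_left, conj_ofReal, ← inner_conj_symm x,
      mul_left_comm, RCLike.conj_mul, ← ofReal_pow, ← ofReal_mul, ofReal_re]
  have hcoeff i : ε * ‖⟪b i, x⟫_𝕜‖ ^ 2 ≤ μ i * ‖⟪b i, x⟫_𝕜‖ ^ 2 := by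
    by_cases hμ : μ i = 0
    · have hker : b i ∈ LinearMap.ker T := by
        rw [LinearMap.mem_ker, hT.apply_eigenvectorBasis, show hT.eigenvalues rfl i = 0 from hμ,
          ofReal_zero, zero_smul]
      simp [(Submodule.mem_orthogonal _ _).mp hx _ hker]
    · exact mul_le_mul_of_nonneg_right (hε _ hμ (hT.hasEigenvalue_eigenvalues rfl i))
        (by positivity)
  rw [hre, ← b.sum_sq_norm_inner_right, mul_sum]
  exact sum_le_sum fun i _ => hcoeff i

variable [CompleteSpace E]

namespace IsStarProjection

variable {p : E →L[𝕜] E}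

theorem re_inner_apply_eq_norm_sq (hp : IsStarProjection p) (x : E) :
    re ⟪x, p x⟫_𝕜 = ‖p x‖ ^ 2 := by
  have hsymm : ∀ x y, ⟪p x, y⟫_𝕜 = ⟪x, p y⟫_𝕜 := hp.isSelfAdjoint.isSymmetric
  rw [← hp.isIdempotentElem.eq, mul_apply_eq_comp, ← hsymm, ← mul_apply_eq_comp,
    hp.isIdempotentElem.eq, inner_self_eq_norm_sq]

theorem norm_sq_add_norm_sq_one_sub_apply (hp : IsStarProjection p) (x : E) :
    ‖p x‖ ^ 2 + ‖(1 - p) x‖ ^ 2 = ‖x‖ ^ 2 := by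
  have hsymm : ∀ x y, ⟪p x, y⟫_𝕜 = ⟪x, p y⟫_𝕜 := hp.isSelfAdjoint.isSymmetric
  have horth : ⟪p x, (1 - p) x⟫_𝕜 = 0 := by
    rw [hsymm, ← mul_apply_eq_comp, hp.mul_one_sub_self, zero_apply, inner_zero_right]
  simpa [sq] using (norm_add_sq_eq_norm_sq_add_norm_sq_of_inner_eq_zero _ _ horth).symm

theorem norm_apply_le (hp : IsStarProjection p) (x : E) : ‖p x‖ ≤ ‖x‖ :=
  le_of_sq_le_sq (by nlinarith [hp.norm_sq_add_norm_sq_one_sub_apply x]) (norm_nonneg x)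

theorem opNorm_sub_le (hp : IsStarProjection p) {A : E →L[𝕜] E} (hAp : A * p = p) {c : ℝ}
    (hc : 0 ≤ c) (h : ∀ x, p x = 0 → ‖A x‖ ≤ c * ‖x‖) : ‖A - p‖ ≤ c := by
  rw [show A - p = A * (1 - p) by rw [mul_sub, mul_one, hAp]]
  refine ContinuousLinearMap.opNorm_le_bound _ hc fun x => ?_
  calc ‖A ((1 - p) x)‖ ≤ c * ‖(1 - p) x‖ := by
        refine h _ ?_
        rw [← mul_apply_eq_comp, hp.mul_one_sub_self, zero_apply]
    _ ≤ c * ‖x‖ := by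
        gcongr
        exact hp.one_sub.norm_apply_le x

end IsStarProjection

section ProjectorProduct

variable {ι : Type*} [Fintype ι] {n : ℕ} {P : Fin n → E →L[𝕜] E}

theorem re_inner_sum_apply_eq_sum_norm_sq {Q : ι → E →L[𝕜] E}
    (hQ : ∀ i, IsStarProjection (Q i)) (x : E) :
    re ⟪x, (∑ i, Q i) x⟫_𝕜 = ∑ i, ‖Q i x‖ ^ 2 := by
  simp [inner_sum, (hQ _).re_inner_apply_eq_norm_sq]

theorem apply_eq_zero_of_sum_apply_eq_zero {Q : ι → E →L[𝕜] E}
    (hQ : ∀ i, IsStarProjection (Q i)) {x : E} (hx : (∑ i, Q i) x = 0) (i : ι) : Q i x = 0 := by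
  have hsum : ∑ i, ‖Q i x‖ ^ 2 = 0 := by
    rw [← re_inner_sum_apply_eq_sum_norm_sq hQ, hx, inner_zero_right, map_zero]
  simpa using (sum_eq_zero_iff_of_nonneg fun i _ => by positivity).mp hsum i (mem_univ i)

theorem mul_eq_right_of_range_le_ker_sum_one_sub (hP : ∀ i, IsStarProjection (P i))
    {G : E →L[𝕜] E} (hG : LinearMap.range (G : E →ₗ[𝕜] E) ≤
      LinearMap.ker ((∑ i, (1 - P i) : E →L[𝕜] E) : E →ₗ[𝕜] E)) (i : Fin n) :
    P i * G = G := by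
  ext z
  have hfix := apply_eq_zero_of_sum_apply_eq_zero (fun i => (hP i).one_sub)
    (hG (LinearMap.mem_range_self _ z)) i
  rw [sub_apply, one_apply_eq_self, sub_eq_zero] at hfix
  exact hfix.symm

theorem sum_norm_sq_one_sub_apply_tailProd (hP : ∀ i, IsStarProjection (P i)) (x : E) :
    ∑ j, ‖(1 - P j) (tailProd P j x)‖ ^ 2 = ‖x‖ ^ 2 - ‖(List.ofFn P).prod x‖ ^ 2 := by
  induction n with
  | zero => simp
  | succ n ih =>
    rw [Fin.sum_univ_succ, List.prod_ofFn_succ, tailProd_zero]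
    simp_rw [tailProd_succ, ih fun i => hP i.succ, mul_apply_eq_comp]
    linarith [(hP 0).norm_sq_add_norm_sq_one_sub_apply ((List.ofFn fun i => P i.succ).prod x)]

theorem norm_one_sub_apply_prod_le (hP : ∀ i, IsStarProjection (P i)) (i : Fin n) (x : E) :
    ‖(1 - P i) ((List.ofFn P).prod x)‖ ≤
      ∑ j with ¬Commute (1 - P i) (1 - P j), ‖(1 - P j) (tailProd P j x)‖ := by
  induction n with
  | zero => exact i.elim0
  | succ n ih =>
    rw [sum_filter, Fin.sum_univ_succ, List.prod_ofFn_succ, mul_apply_eq_comp, tailProd_zero]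
    set y := (List.ofFn fun i => P i.succ).prod x
    induction i using Fin.cases with
    | zero =>
      rw [← mul_apply_eq_comp, (hP 0).one_sub_mul_self, zero_apply, norm_zero]
      exact add_nonneg (by split_ifs <;> positivity)
        (sum_nonneg fun _ _ => by split_ifs <;> positivity)
    | succ i =>
      have hy := ih (fun i => hP i.succ) i
      rw [sum_filter] at hy
      simp_rw [tailProd_succ]
      by_cases hcomm : Commute (1 - P i.succ) (1 - P 0)
      · have hcommP : Commute (1 - P i.succ) (P 0) := by
          simpa using (Commute.one_right _).sub_right hcomm
        rw [if_neg (not_not_intro hcomm), zero_add, ← mul_apply_eq_comp, hcommP.eq,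
          mul_apply_eq_comp]
        exact ((hP 0).norm_apply_le _).trans hy
      · have hsplit : (1 - P i.succ) (P 0 y) =
            (1 - P i.succ) y - (1 - P i.succ) ((1 - P 0) y) := by
          simp [map_sub]
        rw [if_pos hcomm, hsplit]
        linarith [norm_sub_le ((1 - P i.succ) y) ((1 - P i.succ) ((1 - P 0) y)),
          (hP i.succ).one_sub.norm_apply_le ((1 - P 0) y)]

theorem sum_norm_sq_one_sub_apply_prod_le (hP : ∀ i, IsStarProjection (P i)) {g : ℕ}
    (hg : ∀ i, #{j | ¬Commute (1 - P i) (1 - P j)} ≤ g) (x : E) :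
    ∑ i, ‖(1 - P i) ((List.ofFn P).prod x)‖ ^ 2 ≤
      g ^ 2 * (‖x‖ ^ 2 - ‖(List.ofFn P).prod x‖ ^ 2) := by
  have : Std.Symm fun i j => ¬Commute (1 - P i) (1 - P j) := ⟨fun _ _ h hc => h hc.symm⟩
  calc ∑ i, ‖(1 - P i) ((List.ofFn P).prod x)‖ ^ 2
      ≤ ∑ i, (∑ j with ¬Commute (1 - P i) (1 - P j), ‖(1 - P j) (tailProd P j x)‖) ^ 2 := by
        gcongr with i
        exact norm_one_sub_apply_prod_le hP i x
    _ ≤ g ^ 2 * ∑ j, ‖(1 - P j) (tailProd P j x)‖ ^ 2 := sum_sq_sum_filter_le _ hg _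
    _ = g ^ 2 * (‖x‖ ^ 2 - ‖(List.ofFn P).prod x‖ ^ 2) := by
        rw [sum_norm_sq_one_sub_apply_tailProd hP]

end ProjectorProduct

end Projections

theorem detectability_lemma_general
    {E : Type*} [NormedAddCommGroup E] [InnerProductSpace ℂ E] [FiniteDimensional ℂ E]
    {N : ℕ} (P : Fin N → (E →L[ℂ] E))
    (hPsa : ∀ i, IsSelfAdjoint (P i)) (hPidem : ∀ i, P i * P i = P i)
    (H : E →L[ℂ] E) (hH : H = ∑ i, (1 - P i))
    (G : E →L[ℂ] E) (hGsa : IsSelfAdjoint G) (hGidem : G * G = G)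
    (hGrange : LinearMap.range (G : E →ₗ[ℂ] E) = LinearMap.ker (H : E →ₗ[ℂ] E))
    (ε : ℝ)
    (hε : IsLeast {μ : ℝ | μ ≠ 0 ∧
      Module.End.HasEigenvalue (H : E →ₗ[ℂ] E) (μ : ℂ)} ε)
    (g : ℕ)
    (hg : (g : ℕ) = Finset.univ.sup fun i =>
      (Finset.univ.filter fun j => ¬ Commute ((1 : E →L[ℂ] E) - P i) (1 - P j)).card) :
    ‖(List.ofFn P).prod - G‖ ≤ Real.sqrt ((g : ℝ) ^ 2 / (ε + (g : ℝ) ^ 2)) := by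
  have hP i : IsStarProjection (P i) := ⟨hPidem i, hPsa i⟩
  have hQ i : IsStarProjection (1 - P i) := (hP i).one_sub
  have hε_pos : 0 < ε := (eigenvalue_nonneg_of_nonneg hε.1.2 fun x => by
    rw [ContinuousLinearMap.coe_coe, hH, re_inner_sum_apply_eq_sum_norm_sq hQ]
    positivity).lt_of_ne hε.1.1.symm
  have hPG := mul_eq_right_of_range_le_ker_sum_one_sub hP (hH ▸ hGrange.le)
  have hGprod : G * (List.ofFn P).prod = G := List.mul_prod_eq_left_of_forall <| by
    simpa [hGsa.star_eq, (hPsa _).star_eq] using fun i => congr_arg star (hPG i)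
  have hgi i : #{j | ¬Commute (1 - P i) (1 - P j)} ≤ g :=
    hg ▸ le_sup (f := fun i => #{j | ¬Commute (1 - P i) (1 - P j)}) (mem_univ i)
  have hHsymm : (H : E →ₗ[ℂ] E).IsSymmetric :=
    (hH ▸ isSelfAdjoint_sum _ fun i _ => (hQ i).isSelfAdjoint).isSymmetric
  refine IsStarProjection.opNorm_sub_le ⟨hGidem, hGsa⟩
    (List.prod_mul_eq_right_of_forall (by simpa using hPG)) (Real.sqrt_nonneg _) fun χ hχ => ?_
  have hperp : (List.ofFn P).prod χ ∈ (LinearMap.ker (H : E →ₗ[ℂ] E))ᗮ := by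
    rw [← hGrange, hGsa.isSymmetric.orthogonal_range, LinearMap.mem_ker,
      ContinuousLinearMap.coe_coe, ← mul_apply_eq_comp, hGprod, hχ]
  have hgap := hHsymm.mul_norm_sq_le_re_inner_apply (fun μ hμ hμH => hε.2 ⟨hμ, hμH⟩) hperp
  rw [ContinuousLinearMap.coe_coe, hH, re_inner_sum_apply_eq_sum_norm_sq hQ] at hgap
  exact le_sqrt_div_add_mul_of_mul_sq_le (norm_nonneg _) (norm_nonneg _) hε_pos (by positivity)
    (hgap.trans (sum_norm_sq_one_sub_apply_prod_le hP hgi χ))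

/-- Detectability lemma: for a frustration-free Hamiltonian `H = ∑ i, H_i` with projector
local terms `H_i = 1 - P_i`, ground-space projector `G`, spectral gap `ε` (the smallest
nonzero eigenvalue of `H`) and maximum interaction degree `g`, the product
`P = P_1 ⋯ P_N` satisfies `‖P - G‖ ≤ sqrt (g² / (ε + g²))`. -/
theorem detectability_lemma
    {E : Type*} [NormedAddCommGroup E] [InnerProductSpace ℂ E] [FiniteDimensional ℂ E]
    {N : ℕ} (P : Fin N → (E →L[ℂ] E))
    (hPsa : ∀ i, IsSelfAdjoint (P i)) (hPidem : ∀ i, P i * P i = P i)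
    (H : E →L[ℂ] E) (hH : H = ∑ i, (1 - P i))
    (hFF : ∃ ψ : E, ψ ≠ 0 ∧ H ψ = 0)
    (G : E →L[ℂ] E) (hGsa : IsSelfAdjoint G) (hGidem : G * G = G)
    (hGrange : LinearMap.range (G : E →ₗ[ℂ] E) = LinearMap.ker (H : E →ₗ[ℂ] E))
    (ε : ℝ)
    (hε : IsLeast {μ : ℝ | μ ≠ 0 ∧
      Module.End.HasEigenvalue (H : E →ₗ[ℂ] E) (μ : ℂ)} ε)
    (g : ℕ)
    (hg : (g : ℕ) = Finset.univ.sup fun i =>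
      (Finset.univ.filter fun j => ¬ Commute ((1 : E →L[ℂ] E) - P i) (1 - P j)).card) :
    ‖(List.ofFn P).prod - G‖ ≤ Real.sqrt ((g : ℝ) ^ 2 / (ε + (g : ℝ) ^ 2)) :=
  detectability_lemma_general P hPsa hPidem H hH G hGsa hGidem hGrange ε hε g hg
end

section
/- In the detectability lemma setting, for any vector ψ the following energy bound holds: ⟨ψ| P† H P |ψ⟩ ≤ g² (‖ψ‖² - ‖Pψ‖²), where P = P_1 ⋯ P_N, H = Σ_i H_i with H_i = 1 - P_i projectors, and g is the maximum interaction degree. -/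
open scoped Classical InnerProductSpace

/-!
Write `Q_k = P_k ⋯ P_{N-1}` for the suffix products, so that `P = Q_0`, and let
`a_j = ‖(1 - P_j) Q_{j+1} ψ‖` be the norm of the component discarded at step `j`. By Pythagoras
`‖Q_{j+1} ψ‖² = ‖Q_j ψ‖² + a_j²`, so the `a_j²` telescope to `‖ψ‖² - ‖Pψ‖²`. On the other side,
`⟨Pψ, H Pψ⟩ = ∑ᵢ ‖H_i Pψ‖²`. Moving `H_i` rightward through `P`, a factor commuting with `H_i`
costs nothing, a noncommuting factor `P_j` costs at most `a_j` (as `H_i P_j = H_i - H_i H_j`), and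
`H_i` dies at `P_i`; hence `‖H_i Pψ‖` is at most the sum of the `a_j` over the at most `g`
noncommuting `j < i`. Cauchy–Schwarz and counting each `j` for at most `g` values of `i` give `g²`.
-/

open Finset

theorem commute_one_sub_right_iff {R : Type*} [Ring R] {a b : R} :
    Commute a (1 - b) ↔ Commute a b :=
  ⟨fun h => by simpa using (Commute.one_right a).sub_right h, (Commute.one_right a).sub_right⟩

theorem sum_sq_sum_le_sq_mul_sum_sq {ι : Type*} [Fintype ι] [DecidableEq ι] (S : ι → Finset ι) (a : ι → ℝ)
    (g : ℕ) (hrow : ∀ i, #(S i) ≤ g) (hcol : ∀ j, #{i | j ∈ S i} ≤ g) :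
    ∑ i, (∑ j ∈ S i, a j) ^ 2 ≤ g ^ 2 * ∑ j, a j ^ 2 := calc
  ∑ i, (∑ j ∈ S i, a j) ^ 2 ≤ ∑ i, (g : ℝ) * ∑ j ∈ S i, a j ^ 2 := by
    gcongr with i
    exact sq_sum_le_card_mul_sum_sq.trans
      (mul_le_mul_of_nonneg_right (by exact_mod_cast hrow i) (sum_nonneg fun _ _ => sq_nonneg _))
  _ = g * ∑ j, #{i | j ∈ S i} * a j ^ 2 := by
    rw [← mul_sum, sum_comm' (t' := univ) (s' := fun j => {i | j ∈ S i}) (by simp)]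
    simp [sum_const]
  _ ≤ g * ∑ j, g * a j ^ 2 := by
    gcongr with j
    exact_mod_cast hcol j
  _ = g ^ 2 * ∑ j, a j ^ 2 := by rw [← mul_sum, ← mul_assoc, sq]

def suffixProd {M : Type*} [Monoid M] {n : ℕ} (P : Fin n → M) (k : ℕ) : M :=
  ((List.ofFn P).drop k).prod

section SuffixProd

variable {M : Type*} [Monoid M] {n : ℕ}

@[simp]
theorem suffixProd_zero (P : Fin n → M) : suffixProd P 0 = (List.ofFn P).prod := rfl

@[simp]
theorem suffixProd_succ (P : Fin (n + 1) → M) (k : ℕ) :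
    suffixProd P (k + 1) = suffixProd (fun i => P i.succ) k := by
  simp [suffixProd, List.ofFn_succ]

end SuffixProd

section StarProjection

variable {𝕜 E : Type*} [RCLike 𝕜] [NormedAddCommGroup E] [InnerProductSpace 𝕜 E]
  [CompleteSpace E] {Q T : E →L[𝕜] E}

theorem IsStarProjection.re_inner_apply_self (hQ : IsStarProjection Q) (v : E) :
    RCLike.re ⟪v, Q v⟫_𝕜 = ‖Q v‖ ^ 2 := by
  have h : ⟪v, Q v⟫_𝕜 = ⟪Q v, Q v⟫_𝕜 := by
    conv_lhs => rw [← hQ.isIdempotentElem.eq, mul_apply_eq_comp]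
    exact (hQ.isSelfAdjoint.isSymmetric v (Q v)).symm
  rw [h, inner_self_eq_norm_sq]

theorem IsStarProjection.norm_sq_eq_add_norm_sq_one_sub (hQ : IsStarProjection Q) (v : E) :
    ‖v‖ ^ 2 = ‖Q v‖ ^ 2 + ‖(1 - Q) v‖ ^ 2 := by
  have horth : ⟪Q v, (1 - Q) v⟫_𝕜 = 0 := by
    have hker : Q ((1 - Q) v) = 0 := by rw [← mul_apply_eq_comp, hQ.mul_one_sub_self]; rfl
    simpa only [ContinuousLinearMap.coe_coe, hker, inner_zero_right] using
      hQ.isSelfAdjoint.isSymmetric v ((1 - Q) v)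
  simpa [sq] using norm_add_sq_eq_norm_sq_add_norm_sq_of_inner_eq_zero _ _ horth

theorem IsStarProjection.norm_apply_le_s9 (hQ : IsStarProjection Q) (v : E) : ‖Q v‖ ≤ ‖v‖ :=
  (Q.le_of_opNorm_le (hQ.norm_le Q) v).trans_eq (one_mul _)

theorem IsStarProjection.norm_apply_apply_le_of_commute (hQ : IsStarProjection Q)
    (hTQ : Commute T Q) (v : E) : ‖T (Q v)‖ ≤ ‖T v‖ := by
  rw [← mul_apply_eq_comp, hTQ.eq, mul_apply_eq_comp]
  exact hQ.norm_apply_le_s9 _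

theorem IsStarProjection.norm_apply_apply_le (hT : IsStarProjection T) (Q : E →L[𝕜] E) (v : E) :
    ‖T (Q v)‖ ≤ ‖T v‖ + ‖(1 - Q) v‖ := calc
  ‖T (Q v)‖ = ‖T v - T ((1 - Q) v)‖ := by simp
  _ ≤ ‖T v‖ + ‖T ((1 - Q) v)‖ := norm_sub_le _ _
  _ ≤ ‖T v‖ + ‖(1 - Q) v‖ := by gcongr; exact hT.norm_apply_le_s9 _

theorem re_inner_sum_apply_self {ι : Type*} [Fintype ι] {Q : ι → E →L[𝕜] E}
    (hQ : ∀ i, IsStarProjection (Q i)) (v : E) :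
    RCLike.re ⟪v, (∑ i, Q i) v⟫_𝕜 = ∑ i, ‖Q i v‖ ^ 2 := by
  rw [_root_.sum_apply, inner_sum, map_sum]
  exact sum_congr rfl fun i _ => (hQ i).re_inner_apply_self v

theorem norm_sq_sub_norm_sq_prod_ofFn {n : ℕ} {P : Fin n → E →L[𝕜] E}
    (hP : ∀ i, IsStarProjection (P i)) (v : E) :
    ‖v‖ ^ 2 - ‖(List.ofFn P).prod v‖ ^ 2 = ∑ j, ‖(1 - P j) (suffixProd P (j + 1) v)‖ ^ 2 := by
  induction n with
  | zero => simp
  | succ n ih =>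
    rw [List.ofFn_succ, List.prod_cons, mul_apply_eq_comp, Fin.sum_univ_succ]
    simp only [Fin.val_zero, Fin.val_succ, suffixProd_succ, suffixProd_zero]
    rw [← ih fun i => hP i.succ,
      (hP 0).norm_sq_eq_add_norm_sq_one_sub ((List.ofFn fun i => P i.succ).prod v)]
    ring

theorem IsStarProjection.norm_apply_prod_ofFn_le (hT : IsStarProjection T) {n : ℕ}
    {P : Fin n → E →L[𝕜] E} (hP : ∀ i, IsStarProjection (P i)) {m : Fin n}
    (hm : T * P m = 0) (v : E) :
    ‖T ((List.ofFn P).prod v)‖ ≤ ∑ j ∈ univ.filter (fun j => j < m ∧ ¬Commute T (P j)),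
      ‖(1 - P j) (suffixProd P (j + 1) v)‖ := by
  induction n with
  | zero => exact m.elim0
  | succ n ih =>
    set w := (List.ofFn fun i => P i.succ).prod v
    rw [List.ofFn_succ, List.prod_cons, mul_apply_eq_comp, sum_filter, Fin.sum_univ_succ]
    simp only [Fin.val_zero, Fin.val_succ, suffixProd_succ, suffixProd_zero]
    cases m using Fin.cases with
    | zero =>
      rw [← mul_apply_eq_comp, hm]
      simp
    | succ m =>
      simp only [Fin.succ_lt_succ_iff, Fin.succ_pos, true_and]
      rw [← sum_filter]
      have hrest := ih (fun i => hP i.succ) hm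
      by_cases hc : Commute T (P 0)
      · simp only [hc, not_true_eq_false, if_false, zero_add]
        exact ((hP 0).norm_apply_apply_le_of_commute hc w).trans hrest
      · simp only [hc, not_false_eq_true, if_true]
        linarith [hT.norm_apply_apply_le (P 0) w]

end StarProjection

/-- In the detectability-lemma setting, for any vector `ψ` the energy bound
`⟨ψ| P† H P |ψ⟩ ≤ g² (‖ψ‖² - ‖Pψ‖²)` holds, where `P = P_1 ⋯ P_N`,
`H = ∑ i, H_i` with `H_i = 1 - P_i` projectors, and `g` is the maximum
interaction degree. -/
theorem detectability_energy_bound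
    {E : Type*} [NormedAddCommGroup E] [InnerProductSpace ℂ E] [FiniteDimensional ℂ E]
    {N : ℕ} (P : Fin N → (E →L[ℂ] E))
    (hPsa : ∀ i, IsSelfAdjoint (P i)) (hPidem : ∀ i, P i * P i = P i)
    (H : E →L[ℂ] E) (hH : H = ∑ i, (1 - P i))
    (g : ℕ)
    (hg : (g : ℕ) = Finset.univ.sup fun i =>
      (Finset.univ.filter fun j => ¬ Commute ((1 : E →L[ℂ] E) - P i) (1 - P j)).card)
    (ψ : E) :
    (⟪(List.ofFn P).prod ψ, H ((List.ofFn P).prod ψ)⟫_ℂ).re ≤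
      (g : ℝ) ^ 2 * (‖ψ‖ ^ 2 - ‖(List.ofFn P).prod ψ‖ ^ 2) := by
  have hP i : IsStarProjection (P i) := ⟨hPidem i, hPsa i⟩
  have hdeg i : #{j | ¬Commute (1 - P i) (1 - P j)} ≤ g :=
    hg ▸ le_sup (f := fun i => #{j | ¬Commute (1 - P i) (1 - P j)}) (mem_univ i)
  let S i : Finset (Fin N) := {j | j < i ∧ ¬Commute (1 - P i) (1 - P j)}
  have hS i :
      ‖(1 - P i) ((List.ofFn P).prod ψ)‖ ≤ ∑ j ∈ S i, ‖(1 - P j) (suffixProd P (j + 1) ψ)‖ := by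
    simpa only [S, commute_one_sub_right_iff] using
      (hP i).one_sub.norm_apply_prod_ofFn_le hP (hP i).one_sub_mul_self ψ
  have hrow i : #(S i) ≤ g := (card_le_card fun j => by simp [S]).trans (hdeg i)
  have hcol j : #{i | j ∈ S i} ≤ g :=
    (card_le_card fun i => by simp [S, Commute.symm_iff]).trans (hdeg j)
  rw [hH, ← RCLike.re_to_complex, re_inner_sum_apply_self fun i => (hP i).one_sub,
    norm_sq_sub_norm_sq_prod_ofFn hP]
  calc ∑ i, ‖(1 - P i) ((List.ofFn P).prod ψ)‖ ^ 2
      ≤ ∑ i, (∑ j ∈ S i, ‖(1 - P j) (suffixProd P (j + 1) ψ)‖) ^ 2 := by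
        gcongr with i
        exact hS i
    _ ≤ _ := sum_sq_sum_le_sq_mul_sum_sq S _ g hrow hcol
end
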